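/- Let C be an extremal set in a finite simple connected graph Γ with antipodal set D. For an eigenvalue μ_l of the C-local spectrum, equality m_C(μ_l)·m_D(μ_l) = (π₀(C)²/π_l(C)²)·(‖ρC‖²·‖ρD‖²/‖ν‖⁴) holds if and only if the projections z_C(μ_l) = E_l e_C and z_D(μ_l) = E_l e_D are linearly dependent. -/

import Mathlib

open Finset Polynomial BigOperators
open scoped Classical

noncomputable section

/-- The eigenspace of a real matrix `A` (viewed as an operator on Euclidean space)
for the value `μ`. -/
def eigSp {n : ℕ} (A : Matrix (Fin n) (Fin n) ℝ) (μ : ℝ) :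
    Submodule ℝ (EuclideanSpace ℝ (Fin n)) :=
  Module.End.eigenspace (Matrix.toEuclideanLin A) μ

/-- Orthogonal projection onto the `μ`-eigenspace of `A`. -/
def eigProj {n : ℕ} (A : Matrix (Fin n) (Fin n) ℝ) (μ : ℝ) (v : EuclideanSpace ℝ (Fin n)) :
    EuclideanSpace ℝ (Fin n) :=
  (Submodule.orthogonalProjectionOnto (eigSp A μ) v : EuclideanSpace ℝ (Fin n))

/-- The weighted characteristic vector `ρS = Σ_{i∈S} ν_i e_i`. -/
def rho {n : ℕ} (ν : EuclideanSpace ℝ (Fin n)) (S : Finset (Fin n)) :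
    EuclideanSpace ℝ (Fin n) :=
  WithLp.toLp 2 (fun i => if i ∈ S then ν i else 0)

/-- The unit vector `e_S = ρS / ‖ρS‖`. -/
def unitVec {n : ℕ} (ν : EuclideanSpace ℝ (Fin n)) (S : Finset (Fin n)) :
    EuclideanSpace ℝ (Fin n) :=
  (‖rho ν S‖)⁻¹ • rho ν S

/-- The `S`-local multiplicity of `μ`: `m_S(μ) = ‖E_μ e_S‖²`. -/
def mloc {n : ℕ} (A : Matrix (Fin n) (Fin n) ℝ) (ν : EuclideanSpace ℝ (Fin n))
    (S : Finset (Fin n)) (μ : ℝ) : ℝ :=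
  ‖eigProj A μ (unitVec ν S)‖ ^ 2

/-- The `S`-local spectrum: the set of `μ` whose eigenspace sees `ρS`. -/
def evloc {n : ℕ} (A : Matrix (Fin n) (Fin n) ℝ) (ν : EuclideanSpace ℝ (Fin n))
    (S : Finset (Fin n)) : Set ℝ :=
  {μ | eigProj A μ (rho ν S) ≠ 0}

/-- Distance from a vertex `i` to a set of vertices `S`. -/
def dSet {n : ℕ} (G : SimpleGraph (Fin n)) (S : Finset (Fin n)) (i : Fin n) : ℕ :=
  sInf {k | ∃ j ∈ S, G.dist i j = k}

/-- Eccentricity (covering radius) of a vertex set `S`. -/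
def eccS {n : ℕ} (G : SimpleGraph (Fin n)) (S : Finset (Fin n)) : ℕ :=
  Finset.univ.sup (dSet G S)

/-- The `k`-th subconstituent `S_k = {i : dist(i,S) = k}`. -/
def subcons {n : ℕ} (G : SimpleGraph (Fin n)) (S : Finset (Fin n)) (k : ℕ) :
    Finset (Fin n) :=
  Finset.univ.filter (fun i => dSet G S i = k)

/-- `p(A)·v` for a polynomial `p`, a matrix `A` and a Euclidean vector `v`. -/
def aevalVec {n : ℕ} (A : Matrix (Fin n) (Fin n) ℝ) (p : Polynomial ℝ)
    (v : EuclideanSpace ℝ (Fin n)) : EuclideanSpace ℝ (Fin n) :=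
  WithLp.toLp 2 ((Polynomial.aeval A p).mulVec v)

/-- Moment-like parameter `π_l = ∏_{h≠l} |μ_l − μ_h|` for an enumeration `μ`. -/
def piC {d : ℕ} (μ : Fin (d + 1) → ℝ) (l : Fin (d + 1)) : ℝ :=
  ∏ h ∈ Finset.univ.erase l, |μ l - μ h|


/-!
Let `P_l = ∏_{h ≠ l} (X - μ_h)`, a monic polynomial of degree `d`, so that `|P_l(μ_l)| = π_l(C)`.
Since `e_C` lies in the sum of the eigenspaces of the `C`-local eigenvalues,
`P_l(A) e_C = P_l(μ_l) z_C(μ_l)`. Since every vertex of `D` is at distance `d` from `C`,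
`⟨e_D, A^k e_C⟩ = 0` for `k < d`, hence `⟨e_D, P_l(A) e_C⟩ = ⟨e_D, A^d e_C⟩`. So
`P_l(μ_l) ⟨z_D(μ_l), z_C(μ_l)⟩` does not depend on `l`. For `l = 0`, Perron–Frobenius gives
`μ_0 = λ_0` with eigenspace `ℝ ν`, and the pairing equals `‖ρC‖ ‖ρD‖ / ‖ν‖²`. Therefore the
right-hand side is `⟨z_C(μ_l), z_D(μ_l)⟩²`, and the claim is the equality case of Cauchy–Schwarz.
-/
open scoped InnerProductSpace RealInnerProductSpace
open Module.End Matrix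

theorem sq_norm_mul_sq_norm_eq_sq_inner_iff_not_linearIndependent {F : Type*} [NormedAddCommGroup F]
    [InnerProductSpace ℝ F] (x y : F) :
    ‖x‖ ^ 2 * ‖y‖ ^ 2 = ⟪x, y⟫ ^ 2 ↔ ¬ LinearIndependent ℝ ![x, y] := by
  have hcs : ‖⟪y, x⟫‖ = ‖y‖ * ‖x‖ ↔ y = 0 ∨ ∃ r : ℝ, x = r • y :=
    (norm_inner_eq_norm_tfae ℝ y x).out 0 2
  rw [← mul_pow, ← sq_abs ⟪x, y⟫, sq_eq_sq₀ (by positivity) (abs_nonneg _), real_inner_comm,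
    ← Real.norm_eq_abs, mul_comm ‖x‖, eq_comm, hcs, linearIndependent_fin2]
  simp [eq_comm, or_iff_not_imp_left]

section Spectral

variable {𝕜 E : Type*} [RCLike 𝕜] [NormedAddCommGroup E] [InnerProductSpace 𝕜 E]

theorem inner_aeval_apply_eq_coeff_mul_inner_pow_apply (T : E →ₗ[𝕜] E) {x y : E} {d : ℕ}
    (hxy : ∀ k < d, ⟪y, (T ^ k) x⟫_𝕜 = 0) {p : Polynomial 𝕜} (hp : p.natDegree ≤ d) :
    ⟪y, aeval T p x⟫_𝕜 = p.coeff d * ⟪y, (T ^ d) x⟫_𝕜 := by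
  rw [aeval_eq_sum_range' (Nat.lt_succ_of_le hp), LinearMap.sum_apply,
    inner_sum, sum_range_succ, sum_eq_zero fun k hk => ?_, zero_add]
  · simp [inner_smul_right]
  · simp [inner_smul_right, hxy k (mem_range.1 hk)]

variable [FiniteDimensional 𝕜 E] {T : E →ₗ[𝕜] E}

namespace LinearMap.IsSymmetric

theorem sum_starProjection_eigenspace_eq_self (hT : T.IsSymmetric) {S : Finset 𝕜} {v : E}
    (hv : ∀ μ ∉ S, (eigenspace T μ).starProjection v = 0) :
    ∑ μ ∈ S, (eigenspace T μ).starProjection v = v := by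
  have hortho : ∀ μ μ', μ ≠ μ' → ∀ w : E,
      (eigenspace T μ).starProjection ((eigenspace T μ').starProjection w) = 0 :=
    fun μ μ' h w => (Submodule.starProjection_apply_eq_zero_iff _).2
      ((hT.orthogonalFamily_eigenspaces.isOrtho h).symm.le (Submodule.starProjection_apply_mem _ _))
  set u := v - ∑ μ ∈ S, (eigenspace T μ).starProjection v
  have hu : ∀ μ, (eigenspace T μ).starProjection u = 0 := by
    intro μ
    rw [map_sub, map_sum]
    by_cases hμ : μ ∈ S
    · rw [sum_eq_single μ (fun μ' _ h => hortho μ μ' (Ne.symm h) v) (absurd hμ),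
        Submodule.starProjection_eq_self_iff.2 (Submodule.starProjection_apply_mem _ _), sub_self]
    · rw [sum_eq_zero fun μ' hμ' => hortho μ μ' (ne_of_mem_of_not_mem hμ' hμ).symm v, hv μ hμ,
        sub_zero]
  have hu' : u ∈ (⨆ μ, eigenspace T μ)ᗮ := by
    rw [← Submodule.iInf_orthogonal, Submodule.mem_iInf]
    exact fun μ => (Submodule.starProjection_apply_eq_zero_iff _).1 (hu μ)
  rw [hT.orthogonalComplement_iSup_eigenspaces_eq_bot, Submodule.mem_bot, sub_eq_zero] at hu'
  exact hu'.symm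

theorem aeval_apply_eq_eval_smul_starProjection (hT : T.IsSymmetric) {S : Finset 𝕜} {v : E}
    (hv : ∀ μ ∉ S, (eigenspace T μ).starProjection v = 0) {p : Polynomial 𝕜} {μ₀ : 𝕜}
    (hp : ∀ μ ∈ S, μ ≠ μ₀ → p.eval μ = 0) :
    aeval T p v = p.eval μ₀ • (eigenspace T μ₀).starProjection v := by
  have hv' : ∀ μ ∉ insert μ₀ S, (eigenspace T μ).starProjection v = 0 :=
    fun μ hμ => hv μ fun h => hμ (mem_insert_of_mem h)
  have heig : ∀ μ, aeval T p ((eigenspace T μ).starProjection v) =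
      p.eval μ • (eigenspace T μ).starProjection v := fun μ =>
    aeval_apply_of_mem_apply_eq_smul (mem_eigenspace_iff.1 (Submodule.starProjection_apply_mem _ _))
  conv_lhs => rw [← hT.sum_starProjection_eigenspace_eq_self hv']
  rw [map_sum, sum_eq_single_of_mem μ₀ (mem_insert_self _ _) fun μ hμ hne => ?_, heig]
  rw [heig, hp μ (mem_of_mem_insert_of_ne hμ hne) hne, zero_smul]

theorem eval_nodal_mul_inner_starProjection_eq (hT : T.IsSymmetric) {d : ℕ}
    {μ : Fin (d + 1) → 𝕜} {x y : E}
    (hx : ∀ t ∉ Set.range μ, (eigenspace T t).starProjection x = 0)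
    (hxy : ∀ k < d, ⟪y, (T ^ k) x⟫_𝕜 = 0) (l : Fin (d + 1)) :
    (Lagrange.nodal (univ.erase l) μ).eval (μ l) *
        ⟪(eigenspace T (μ l)).starProjection y, (eigenspace T (μ l)).starProjection x⟫_𝕜 =
      ⟪y, (T ^ d) x⟫_𝕜 := by
  set P := Lagrange.nodal (univ.erase l) μ
  have hdeg : P.natDegree = d := by simp [P, Lagrange.natDegree_nodal]
  have hcoeff : P.coeff d = 1 := hdeg ▸ Lagrange.nodal_monic.coeff_natDegree
  have hPx : aeval T P x = P.eval (μ l) • (eigenspace T (μ l)).starProjection x := by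
    refine hT.aeval_apply_eq_eval_smul_starProjection (S := univ.image μ)
      (fun t ht => hx t fun ⟨h, hh⟩ => ht (hh ▸ mem_image_of_mem μ (mem_univ h))) ?_
    intro t ht hne
    obtain ⟨h, -, rfl⟩ := mem_image.1 ht
    exact Lagrange.eval_nodal_at_node (mem_erase.2 ⟨fun e => hne (e ▸ rfl), mem_univ h⟩)
  rw [← one_mul ⟪y, _⟫_𝕜, ← hcoeff,
    ← inner_aeval_apply_eq_coeff_mul_inner_pow_apply T hxy hdeg.le, hPx, inner_smul_right, Submodule.inner_starProjection_left_eq_right,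
    Submodule.starProjection_eq_self_iff.2 (Submodule.starProjection_apply_mem _ _)]

end LinearMap.IsSymmetric

end Spectral

namespace SimpleGraph

variable {V : Type*} [Fintype V] (G : SimpleGraph V) [DecidableRel G.Adj]

theorem adjMatrix_pow_apply_eq_zero_of_lt_dist [DecidableEq V] {R : Type*} [Semiring R] {k : ℕ}
    {i j : V} (h : k < G.dist i j) : (G.adjMatrix R ^ k) i j = 0 := by
  rw [adjMatrix_pow_apply_eq_card_walk,
    Fintype.card_eq_zero_iff.2 ⟨fun ⟨p, hp⟩ => h.not_ge (hp ▸ G.dist_le p)⟩, Nat.cast_zero]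

theorem dotProduct_adjMatrix_pow_mulVec_eq_zero [DecidableEq V] {R : Type*} [Semiring R] {k : ℕ}
    {x y : V → R} (h : ∀ i j, y i ≠ 0 → x j ≠ 0 → k < G.dist i j) :
    y ⬝ᵥ (G.adjMatrix R ^ k) *ᵥ x = 0 := by
  refine sum_eq_zero fun i _ => ?_
  by_cases hy : y i = 0
  · simp [hy]
  refine mul_eq_zero_of_right _ (sum_eq_zero fun j _ => ?_)
  by_cases hx : x j = 0
  · simp [hx]
  simp [G.adjMatrix_pow_apply_eq_zero_of_lt_dist (h i j hy hx)]

variable {G} {ν : V → ℝ} {θ : ℝ}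

theorem le_of_adjMatrix_mulVec_eq_smul (hν : ∀ i, 0 < ν i) (hθ : G.adjMatrix ℝ *ᵥ ν = θ • ν)
    {t : ℝ} {w : V → ℝ} (hw : G.adjMatrix ℝ *ᵥ w = t • w) (hw0 : w ≠ 0) : t ≤ θ := by
  set a : V → ℝ := fun i => |w i|
  have hpos : 0 < ν ⬝ᵥ a := by
    obtain ⟨i, hi⟩ := Function.ne_iff.1 hw0
    exact sum_pos' (fun j _ => mul_nonneg (hν j).le (abs_nonneg _))
      ⟨i, mem_univ _, mul_pos (hν i) (abs_pos.2 hi)⟩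
  have hle : |t| • a ≤ G.adjMatrix ℝ *ᵥ a := fun i =>
    calc |t| * |w i| = |(G.adjMatrix ℝ *ᵥ w) i| := by rw [hw]; simp [abs_mul]
      _ = |∑ j ∈ G.neighborFinset i, w j| := by rw [adjMatrix_mulVec_apply]
      _ ≤ ∑ j ∈ G.neighborFinset i, |w j| := abs_sum_le_sum_abs _ _
      _ = (G.adjMatrix ℝ *ᵥ a) i := (adjMatrix_mulVec_apply _ _ _).symm
  have hsym : ν ⬝ᵥ G.adjMatrix ℝ *ᵥ a = θ * (ν ⬝ᵥ a) := by
    rw [dotProduct_mulVec, ← mulVec_transpose, transpose_adjMatrix, hθ, smul_dotProduct,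
      smul_eq_mul]
  have h : |t| * (ν ⬝ᵥ a) ≤ θ * (ν ⬝ᵥ a) := by
    rw [← hsym, ← smul_eq_mul, ← dotProduct_smul]
    exact dotProduct_le_dotProduct_of_nonneg_left hle fun i => (hν i).le
  exact (le_abs_self t).trans (le_of_mul_le_mul_right h hpos)

theorem eq_zero_of_adjMatrix_mulVec_eq_smul (hconn : G.Connected) {t : ℝ} {u : V → ℝ}
    (hu : 0 ≤ u) (hAu : G.adjMatrix ℝ *ᵥ u = t • u) {i : V} (hi : u i = 0) : u = 0 := by
  have hstep : ∀ a b, G.Adj a b → u a = 0 → u b = 0 := by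
    intro a b hab ha
    have hsum : ∑ c ∈ G.neighborFinset a, u c = 0 := by
      rw [← adjMatrix_mulVec_apply, hAu, Pi.smul_apply, ha, smul_zero]
    exact (sum_eq_zero_iff_of_nonneg fun c _ => hu c).1 hsum b ((G.mem_neighborFinset a b).2 hab)
  funext j
  obtain ⟨p⟩ := hconn i j
  induction p with
  | nil => exact hi
  | cons hab _ ih => exact ih (hstep _ _ hab hi)

theorem exists_eq_smul_of_adjMatrix_mulVec_eq_smul (hconn : G.Connected) (hν : ∀ i, 0 < ν i)
    (hθ : G.adjMatrix ℝ *ᵥ ν = θ • ν) {w : V → ℝ} (hw : G.adjMatrix ℝ *ᵥ w = θ • w) :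
    ∃ c : ℝ, w = c • ν := by
  have := hconn.nonempty
  -- With `c = min w i / ν i`, `w - c • ν` is a nonnegative eigenvector vanishing at `i₀`.
  obtain ⟨i₀, hi₀⟩ := Finite.exists_min fun i => w i / ν i
  refine ⟨w i₀ / ν i₀, eq_of_sub_eq_zero (eq_zero_of_adjMatrix_mulVec_eq_smul hconn (t := θ)
    (i := i₀) (fun i => ?_) ?_ ?_)⟩
  · simpa using (le_div_iff₀ (hν i)).1 (hi₀ i)
  · rw [mulVec_sub, mulVec_smul, hw, hθ, smul_sub, smul_comm]
  · simp [div_mul_cancel₀ _ (hν i₀).ne']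

end SimpleGraph

section Euclidean

variable {n : ℕ}

theorem mem_eigSp {A : Matrix (Fin n) (Fin n) ℝ} {μ : ℝ} {x : EuclideanSpace ℝ (Fin n)} :
    x ∈ eigSp A μ ↔ A *ᵥ x = μ • x := by
  rw [eigSp, mem_eigenspace_iff, ← (WithLp.ofLp_injective 2).eq_iff]
  rfl

theorem inner_toEuclideanLin_pow_apply (A : Matrix (Fin n) (Fin n) ℝ) (k : ℕ)
    (x y : EuclideanSpace ℝ (Fin n)) :
    ⟪y, (toEuclideanLin A ^ k) x⟫ = y.ofLp ⬝ᵥ (A ^ k) *ᵥ x.ofLp := by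
  rw [← inner_toEuclideanCLM, map_pow, ← coe_toEuclideanCLM_eq_toEuclideanLin,
    ← ContinuousLinearMap.toLinearMap_pow]
  rfl

theorem inner_rho_eq_norm_sq (ν : EuclideanSpace ℝ (Fin n)) (S : Finset (Fin n)) :
    ⟪ν, rho ν S⟫ = ‖rho ν S‖ ^ 2 := by
  rw [← real_inner_self_eq_norm_sq]
  refine sum_congr rfl fun i _ => ?_
  by_cases hi : i ∈ S <;> simp [rho, hi]

theorem inner_unitVec_eq_norm_rho (ν : EuclideanSpace ℝ (Fin n)) (S : Finset (Fin n)) :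
    ⟪ν, unitVec ν S⟫ = ‖rho ν S‖ := by
  rw [unitVec, inner_smul_right, inner_rho_eq_norm_sq, sq, ← div_eq_inv_mul, mul_self_div_self]

theorem mem_of_unitVec_apply_ne_zero {ν : EuclideanSpace ℝ (Fin n)} {S : Finset (Fin n)}
    {i : Fin n} (h : unitVec ν S i ≠ 0) : i ∈ S := by
  by_contra hi
  simp [unitVec, rho, hi] at h

theorem eigProj_unitVec (A : Matrix (Fin n) (Fin n) ℝ) (μ : ℝ) (ν : EuclideanSpace ℝ (Fin n))
    (S : Finset (Fin n)) : eigProj A μ (unitVec ν S) = ‖rho ν S‖⁻¹ • eigProj A μ (rho ν S) := by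
  simp [eigProj, unitVec]

theorem le_dist_of_mem_subcons {G : SimpleGraph (Fin n)} {C : Finset (Fin n)} {d : ℕ}
    {i j : Fin n} (hi : i ∈ subcons G C d) (hj : j ∈ C) : d ≤ G.dist i j := by
  rw [subcons, mem_filter] at hi
  exact hi.2 ▸ Nat.sInf_le ⟨j, hj, rfl⟩

variable {G : SimpleGraph (Fin n)} [DecidableRel G.Adj] {ν : EuclideanSpace ℝ (Fin n)} {θ : ℝ}

theorem eigProj_perron_eq_smul (hconn : G.Connected) (hν : ∀ i, 0 < ν i)
    (hθ : G.adjMatrix ℝ *ᵥ ν = θ • ν) (v : EuclideanSpace ℝ (Fin n)) :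
    eigProj (G.adjMatrix ℝ) θ v = (⟪ν, v⟫ / ‖ν‖ ^ 2) • ν := by
  have hsp : eigSp (G.adjMatrix ℝ) θ = ℝ ∙ ν := by
    refine le_antisymm (fun w hw => ?_)
      ((Submodule.span_singleton_le_iff_mem _ _).2 (mem_eigSp.2 hθ))
    obtain ⟨c, hc⟩ :=
      SimpleGraph.exists_eq_smul_of_adjMatrix_mulVec_eq_smul hconn hν hθ (mem_eigSp.1 hw)
    exact Submodule.mem_span_singleton.2 ⟨c, WithLp.ofLp_injective 2 (a₁ := c • ν) hc.symm⟩
  -- `rw [hsp]` is blocked by the instance argument of `starProjection`; substitute instead.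
  have key : ∀ (K : Submodule ℝ (EuclideanSpace ℝ (Fin n))) [K.HasOrthogonalProjection],
      K = ℝ ∙ ν → K.starProjection v = (⟪ν, v⟫ / ‖ν‖ ^ 2) • ν := by
    rintro K _ rfl
    exact Submodule.starProjection_singleton ℝ v
  exact key _ hsp

theorem isGreatest_evloc (hconn : G.Connected) (hν : ∀ i, 0 < ν i)
    (hθ : G.adjMatrix ℝ *ᵥ ν = θ • ν) {C : Finset (Fin n)} (hC : C.Nonempty) :
    IsGreatest (evloc (G.adjMatrix ℝ) ν C) θ := by
  refine ⟨?_, fun t ht => ?_⟩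
  · obtain ⟨i, hi⟩ := hC
    have hρ : rho ν C ≠ 0 := fun h => (hν i).ne' (by simpa [rho, hi] using congrArg (· i) h)
    have hν0 : ν ≠ 0 := fun h => (hν i).ne' (by simp [h])
    change eigProj _ θ (rho ν C) ≠ 0
    rw [eigProj_perron_eq_smul hconn hν hθ, inner_rho_eq_norm_sq]
    exact smul_ne_zero (by positivity) hν0
  · exact SimpleGraph.le_of_adjMatrix_mulVec_eq_smul hν hθ
      (mem_eigSp.1 (Submodule.starProjection_apply_mem (eigSp _ t) (rho ν C)))
      (by simpa [evloc, eigProj] using ht)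

theorem inner_eigProj_perron_unitVec (hconn : G.Connected) (hν : ∀ i, 0 < ν i)
    (hθ : G.adjMatrix ℝ *ᵥ ν = θ • ν) (S S' : Finset (Fin n)) :
    ⟪eigProj (G.adjMatrix ℝ) θ (unitVec ν S), eigProj (G.adjMatrix ℝ) θ (unitVec ν S')⟫ =
      ‖rho ν S‖ * ‖rho ν S'‖ / ‖ν‖ ^ 2 := by
  obtain ⟨i⟩ := hconn.nonempty
  have hν0 : ‖ν‖ ≠ 0 := norm_ne_zero_iff.2 fun h => (hν i).ne' (by simp [h])
  rw [eigProj_perron_eq_smul hconn hν hθ, eigProj_perron_eq_smul hconn hν hθ,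
    inner_unitVec_eq_norm_rho, inner_unitVec_eq_norm_rho, real_inner_smul_left,
    real_inner_smul_right, real_inner_self_eq_norm_sq]
  field_simp

end Euclidean

theorem piC_eq_abs_eval_nodal {d : ℕ} (μ : Fin (d + 1) → ℝ) (l : Fin (d + 1)) :
    piC μ l = |(Lagrange.nodal (univ.erase l) μ).eval (μ l)| := by
  rw [piC, Lagrange.eval_nodal, abs_prod]

theorem multiplicity_product_equality_iff_dependent_general {n : ℕ} (G : SimpleGraph (Fin n)) [DecidableRel G.Adj]
    (hconn : G.Connected)
    (ν : EuclideanSpace ℝ (Fin n)) (hν : ∀ i, 0 < ν i) (lam0 : ℝ)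
    (hPerron : (G.adjMatrix ℝ).mulVec ν = lam0 • ν)
    (C : Finset (Fin n)) (hC : C.Nonempty)
    (d : ℕ) (μ : Fin (d + 1) → ℝ) (hμa : StrictAnti μ)
    (hμr : Set.range μ = evloc (G.adjMatrix ℝ) ν C)
    (hext : eccS G C = d) :
    ∀ l : Fin (d + 1),
      (mloc (G.adjMatrix ℝ) ν C (μ l) * mloc (G.adjMatrix ℝ) ν (subcons G C (eccS G C)) (μ l)
        = (piC μ 0) ^ 2 / (piC μ l) ^ 2 *
            (‖rho ν C‖ ^ 2 * ‖rho ν (subcons G C (eccS G C))‖ ^ 2 / ‖ν‖ ^ 4))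
      ↔ ¬ LinearIndependent ℝ
          ![eigProj (G.adjMatrix ℝ) (μ l) (unitVec ν C),
            eigProj (G.adjMatrix ℝ) (μ l) (unitVec ν (subcons G C (eccS G C)))] := by
  intro l
  rw [hext]
  set A := G.adjMatrix ℝ
  set D := subcons G C d
  have hT : (toEuclideanLin A).IsSymmetric :=
    isSymmetric_toEuclideanLin_iff.2 (G.isHermitian_adjMatrix (R := ℝ))
  have hloc : ∀ t ∉ Set.range μ, eigProj A t (unitVec ν C) = 0 := fun t ht => by
    rw [hμr] at ht
    rw [eigProj_unitVec, not_not.1 ht, smul_zero]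
  have hfar : ∀ k < d, ⟪unitVec ν D, (toEuclideanLin A ^ k) (unitVec ν C)⟫ = 0 := fun k hk => by
    rw [inner_toEuclideanLin_pow_apply]
    exact G.dotProduct_adjMatrix_pow_mulVec_eq_zero fun i j hi hj => hk.trans_le
      (le_dist_of_mem_subcons (mem_of_unitVec_apply_ne_zero hi) (mem_of_unitVec_apply_ne_zero hj))
  have key : ∀ l', (Lagrange.nodal (univ.erase l') μ).eval (μ l') *
      ⟪eigProj A (μ l') (unitVec ν D), eigProj A (μ l') (unitVec ν C)⟫ =
        ⟪unitVec ν D, (toEuclideanLin A ^ d) (unitVec ν C)⟫ :=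
    hT.eval_nodal_mul_inner_starProjection_eq hloc hfar
  have hμ0 : μ 0 = lam0 :=
    (show IsGreatest (Set.range μ) (μ 0) from
      ⟨⟨0, rfl⟩, by rintro _ ⟨h, rfl⟩; exact hμa.antitone (Fin.zero_le h)⟩).unique
    (hμr ▸ isGreatest_evloc hconn hν hPerron hC)
  have hPl : (Lagrange.nodal (univ.erase l) μ).eval (μ l) ≠ 0 :=
    Lagrange.eval_nodal_not_at_node fun h hh => hμa.injective.ne (ne_of_mem_erase hh).symm
  have h := (key l).trans (key 0).symm
  rw [hμ0, inner_eigProj_perron_unitVec hconn hν hPerron, mul_comm] at h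
  rw [mloc, mloc, ← sq_norm_mul_sq_norm_eq_sq_inner_iff_not_linearIndependent]
  refine Eq.congr_right ?_
  rw [real_inner_comm, eq_div_of_mul_eq hPl h, piC_eq_abs_eval_nodal, piC_eq_abs_eval_nodal,
    sq_abs, sq_abs, hμ0]
  ring

theorem multiplicity_product_equality_iff_dependent {n : ℕ} (hn : 0 < n) (G : SimpleGraph (Fin n)) [DecidableRel G.Adj]
    (hconn : G.Connected)
    (ν : EuclideanSpace ℝ (Fin n)) (hν : ∀ i, 0 < ν i) (lam0 : ℝ)
    (hPerron : (G.adjMatrix ℝ).mulVec ν = lam0 • ν)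
    (C : Finset (Fin n)) (hC : C.Nonempty)
    (d : ℕ) (μ : Fin (d + 1) → ℝ) (hμa : StrictAnti μ)
    (hμr : Set.range μ = evloc (G.adjMatrix ℝ) ν C)
    (hext : eccS G C = d) :
    ∀ l : Fin (d + 1),
      (mloc (G.adjMatrix ℝ) ν C (μ l) * mloc (G.adjMatrix ℝ) ν (subcons G C (eccS G C)) (μ l)
        = (piC μ 0) ^ 2 / (piC μ l) ^ 2 *
            (‖rho ν C‖ ^ 2 * ‖rho ν (subcons G C (eccS G C))‖ ^ 2 / ‖ν‖ ^ 4))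
      ↔ ¬ LinearIndependent ℝ
          ![eigProj (G.adjMatrix ℝ) (μ l) (unitVec ν C),
            eigProj (G.adjMatrix ℝ) (μ l) (unitVec ν (subcons G C (eccS G C)))] :=
  multiplicity_product_equality_iff_dependent_general G hconn ν hν lam0 hPerron C hC d μ hμa hμr
    hext
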